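/- For every integer p ≥ 1 and every n ≥ 0, the higher order Fubini number satisfies F_n^p = Σ_{k=0}^∞ B_n^{p−1}(k)/2^{k+1}, the series being convergent. (For p = 1 this is the classical formula F_n = Σ_{k≥0} k^n/2^{k+1}.) -/

import Mathlib

/-- Stirling numbers of the second kind. -/
def S2 : ℕ → ℕ → ℕ
  | 0, 0 => 1
  | 0, _ + 1 => 0
  | _ + 1, 0 => 0
  | n + 1, m + 1 => (m + 1) * S2 n (m + 1) + S2 n m

/-- Entries `S^p_{n,m}` of the `p`-th power of the Stirling matrix (for `p ≥ 1`;
the value at `p = 0` is junk). -/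
def Sp : ℕ → ℕ → ℕ → ℕ
  | 0, _, _ => 0
  | 1, n, m => S2 n m
  | p + 2, n, m => ∑ k ∈ Finset.range (n + 1), S2 n k * Sp (p + 1) k m

/-- Higher order Bell polynomials: `B_n^0(x) = x^n`, `B_n^p(x) = ∑_{m=0}^n S^p_{n,m} x^m`. -/
noncomputable def BellP : ℕ → ℕ → ℝ → ℝ
  | 0, n, x => x ^ n
  | p + 1, n, x => ∑ m ∈ Finset.range (n + 1), (Sp (p + 1) n m : ℝ) * x ^ m

/-- Higher order Fubini polynomials: `F_n^p(x) = ∑_{m=0}^n S^p_{n,m} m! x^m`. -/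
noncomputable def FubPoly (p n : ℕ) (x : ℝ) : ℝ :=
  ∑ m ∈ Finset.range (n + 1), (Sp p n m : ℝ) * m.factorial * x ^ m

/-- Higher order Fubini numbers: `F_n^p = F_n^p(1)`. -/
noncomputable def FubNum (p n : ℕ) : ℝ := FubPoly p n 1

/-! Expanding `k ^ n = ∑ m, S(n, m) m! (k choose m)` and using `∑ k, (k choose m) / 2 ^ (k + 1) = 1`
gives the case `p = 1`. Both `n ↦ B^p_n(x)` and `n ↦ F^{p+1}_n(x)` arise from their predecessors
by the Stirling transform `(a_n) ↦ (∑ k, S(n, k) a_k)`, which is a finite combination and so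
commutes with the series; induction on `p` finishes the proof. -/

open Finset
open scoped Nat

theorem S2_eq_stirlingSecond : S2 = Nat.stirlingSecond := by
  funext n m
  induction n generalizing m with
  | zero => cases m <;> rfl
  | succ n ih =>
    cases m with
    | zero => rfl
    | succ m => simp only [S2, Nat.stirlingSecond_succ_succ, ih]

theorem Sp_succ_eq_zero_of_lt (p : ℕ) {n m : ℕ} (h : n < m) : Sp (p + 1) n m = 0 := by
  induction p generalizing n with
  | zero => simp only [Sp, S2_eq_stirlingSecond, Nat.stirlingSecond_eq_zero_of_lt h]
  | succ p ih =>
    refine sum_eq_zero fun k hk => ?_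
    rw [ih (by rw [mem_range] at hk; omega), mul_zero]

theorem Nat.mul_descFactorial (x m : ℕ) :
    x * x.descFactorial m = x.descFactorial (m + 1) + m * x.descFactorial m := by
  rcases le_or_gt m x with h | h
  · rw [Nat.descFactorial_succ, ← add_mul, Nat.sub_add_cancel h]
  · simp [Nat.descFactorial_eq_zero_iff_lt.2 h]

theorem Nat.pow_eq_sum_stirlingSecond_mul_descFactorial (x n : ℕ) :
    x ^ n = ∑ m ∈ range (n + 1), n.stirlingSecond m * x.descFactorial m := by
  induction n with
  | zero => simp
  | succ n ih =>
    have shift : ∑ m ∈ range (n + 1), n.stirlingSecond m * (m * x.descFactorial m)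
        = ∑ m ∈ range (n + 1), (m + 1) * n.stirlingSecond (m + 1) * x.descFactorial (m + 1) := by
      rw [sum_range_succ' (fun m => n.stirlingSecond m * (m * x.descFactorial m)),
        sum_range_succ, Nat.stirlingSecond_eq_zero_of_lt n.lt_succ_self]
      simp only [zero_mul, mul_zero, add_zero]
      exact sum_congr rfl fun m _ => by ring
    calc x ^ (n + 1)
        = ∑ m ∈ range (n + 1), n.stirlingSecond m * (x * x.descFactorial m) := by
          rw [pow_succ', ih, mul_sum]
          exact sum_congr rfl fun m _ => by ring
      _ = ∑ m ∈ range (n + 1), ((m + 1) * n.stirlingSecond (m + 1) + n.stirlingSecond m)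
            * x.descFactorial (m + 1) := by
          simp only [Nat.mul_descFactorial, mul_add, sum_add_distrib, shift, add_mul]
          exact add_comm _ _
      _ = ∑ m ∈ range (n + 2), (n + 1).stirlingSecond m * x.descFactorial m := by
          simp [sum_range_succ' _ (n + 1), Nat.stirlingSecond_succ_succ]

theorem hasSum_choose_mul_geometric {𝕜 : Type*} [NormedField 𝕜] [CompleteSpace 𝕜]
    (m : ℕ) {r : 𝕜} (hr : ‖r‖ < 1) :
    HasSum (fun k : ℕ => (k.choose m : 𝕜) * r ^ k) (r ^ m / (1 - r) ^ (m + 1)) := by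
  have vanish : ∑ k ∈ range m, (k.choose m : 𝕜) * r ^ k = 0 :=
    sum_eq_zero fun k hk => by simp [Nat.choose_eq_zero_of_lt (mem_range.1 hk)]
  rw [← hasSum_nat_add_iff' m, vanish, sub_zero, div_eq_mul_one_div]
  exact ((hasSum_choose_mul_geometric_of_norm_lt_one m hr).mul_left (r ^ m)).congr_fun
    fun k => by rw [pow_add]; ring

theorem hasSum_choose_div_two_pow (m : ℕ) :
    HasSum (fun k : ℕ => (k.choose m : ℝ) / 2 ^ (k + 1)) 1 := by
  have h := (hasSum_choose_mul_geometric m (r := (2⁻¹ : ℝ)) (by norm_num)).div_const 2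
  have value : (2⁻¹ : ℝ) ^ m / (1 - 2⁻¹) ^ (m + 1) / 2 = 1 := by
    rw [show (1 : ℝ) - 2⁻¹ = 2⁻¹ by norm_num, pow_succ]; field_simp
  rw [value] at h
  refine h.congr_fun fun k => ?_
  rw [pow_succ, inv_pow]; field_simp

theorem hasSum_pow_div_two_pow (n : ℕ) :
    HasSum (fun k : ℕ => (k : ℝ) ^ n / 2 ^ (k + 1))
      (∑ m ∈ range (n + 1), (n.stirlingSecond m * m ! : ℝ)) := by
  have expand : ∀ k : ℕ, (k : ℝ) ^ n / 2 ^ (k + 1) =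
      ∑ m ∈ range (n + 1), (n.stirlingSecond m * m ! : ℝ) * (k.choose m / 2 ^ (k + 1)) := by
    intro k
    rw [← Nat.cast_pow, Nat.pow_eq_sum_stirlingSecond_mul_descFactorial]
    push_cast [Nat.descFactorial_eq_factorial_mul_choose, sum_div]
    exact sum_congr rfl fun m _ => by ring
  have h := hasSum_sum fun m (_ : m ∈ range (n + 1)) =>
    (hasSum_choose_div_two_pow m).mul_left (n.stirlingSecond m * m ! : ℝ)
  simp only [mul_one] at h
  exact h.congr_fun expand

theorem sum_Sp_add_two_mul {R : Type*} [CommSemiring R] (p n : ℕ) (c : ℕ → R) :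
    ∑ m ∈ range (n + 1), (Sp (p + 2) n m : R) * c m =
      ∑ k ∈ range (n + 1), (n.stirlingSecond k : R) *
        ∑ m ∈ range (k + 1), (Sp (p + 1) k m : R) * c m := by
  simp only [Sp, S2_eq_stirlingSecond, Nat.cast_sum, Nat.cast_mul, sum_mul, mul_sum, mul_assoc]
  rw [Finset.sum_comm]
  refine sum_congr rfl fun k hk => ?_
  refine sum_subset (range_subset_range.2 (by simpa using hk)) (fun m _ hm => ?_) |>.symm
  rw [Sp_succ_eq_zero_of_lt p (by simpa using hm)]
  simp

theorem BellP_succ (p n : ℕ) (x : ℝ) :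
    BellP (p + 1) n x = ∑ k ∈ range (n + 1), (n.stirlingSecond k : ℝ) * BellP p k x := by
  cases p with
  | zero => simp [BellP, Sp, S2_eq_stirlingSecond]
  | succ p => exact sum_Sp_add_two_mul p n (x ^ ·)

theorem FubPoly_add_two (p n : ℕ) (x : ℝ) :
    FubPoly (p + 2) n x = ∑ k ∈ range (n + 1), (n.stirlingSecond k : ℝ) * FubPoly (p + 1) k x := by
  simp only [FubPoly, mul_assoc]
  exact sum_Sp_add_two_mul p n fun m => m ! * x ^ m

theorem FubNum_one (n : ℕ) : FubNum 1 n = ∑ m ∈ range (n + 1), (n.stirlingSecond m * m ! : ℝ) := by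
  simp [FubNum, FubPoly, Sp, S2_eq_stirlingSecond]

theorem hasSum_BellP_div_two_pow (p n : ℕ) :
    HasSum (fun k : ℕ => BellP p n k / 2 ^ (k + 1)) (FubNum (p + 1) n) := by
  induction p generalizing n with
  | zero => simpa [BellP, FubNum_one] using hasSum_pow_div_two_pow n
  | succ p ih =>
    simp only [BellP_succ, FubNum, FubPoly_add_two, sum_div, mul_div_assoc]
    exact hasSum_sum fun k _ => (ih k).mul_left _

/-- `F_n^p = ∑_{k≥0} B_n^{p-1}(k) / 2^{k+1}`, the series being convergent. -/
theorem fubini_eq_bell_sum (p : ℕ) (hp : 1 ≤ p) (n : ℕ) :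
    Summable (fun k : ℕ => BellP (p - 1) n (k : ℝ) / 2 ^ (k + 1)) ∧
      FubNum p n = ∑' k : ℕ, BellP (p - 1) n (k : ℝ) / 2 ^ (k + 1) := by
  obtain ⟨q, rfl⟩ := Nat.exists_eq_add_of_le' hp
  have h := hasSum_BellP_div_two_pow q n
  exact ⟨h.summable, h.tsum_eq.symm⟩
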